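/- (Lemma 5, fixed-point characterization of the optimal P_{U₂|Y₂} for fixed Q and fixed P_{U₁|Y₁} in the multiterminal problem.) Fix β=(s₁,s₂,α) with s₁,s₂>0, α∈[0,1], ᾱ:=1−α, an auxiliary tuple Q with strictly positive components, and a conditional pmf P_{U₁|Y₁}; assume p(y₂)>0 for all y₂. For a conditional pmf P_{U₂|Y₂} with strictly positive entries and induced marginal p(u₂)=Σ_{y₂}p(y₂)p(u₂|y₂), define μ₂(u₂,y₂) := (α/s₂) Σ_{u₁,y₁} p(y₁|y₂) p(u₁|y₁) log q(y₁|u₁,u₂) + (ᾱ/s₂) Σ_{u₁} p(u₁|y₂) log q(y₂|u₁,u₂) + (s₁/s₂) Σ_{u₁} p(u₁|y₂) log q(u₁,u₂) + log q(u₂) − (s₁/s₂) log p(u₂), where p(u₁|y₂)=Σ_{y₁} p(y₁|y₂)p(u₁|y₁). Then a strictly positive P_{U₂|Y₂} minimizes the (convex) map P_{U₂|Y₂} ↦ F_β((P_{U₁|Y₁},P_{U₂|Y₂}),Q) over conditional pmfs from 𝒴₂ to 𝒰₂ if and only if it satisfies, for all u₂ and y₂, p(u₂|y₂) = exp(μ₂(u₂,y₂))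 / Σ_{u₂'} exp(μ₂(u₂',y₂)). -/
import Mathlib


open Finset Real

noncomputable section

/-- Shannon entropy of a finitely supported nonnegative vector,
with the convention `0 · log 0 = 0` (natural logarithm). -/
def ent {α : Type} [Fintype α] (p : α → ℝ) : ℝ := ∑ a, Real.negMulLog (p a)

/-- `p` is a probability mass function on the finite alphabet `α`. -/
def IsPmf {α : Type} [Fintype α] (p : α → ℝ) : Prop := (∀ a, 0 ≤ p a) ∧ ∑ a, p a = 1

/-- `w` is a conditional pmf (channel) from `α` to `β`. -/
def IsChan {α β : Type} [Fintype α] [Fintype β] (w : α → β → ℝ) : Prop := ∀ a, IsPmf (w a)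

/-- Kullback–Leibler divergence between two vectors on a finite alphabet
(convention `0 · log (0/q) = 0` is automatic since the coefficient vanishes). -/
def KL {α : Type} [Fintype α] (r q : α → ℝ) : ℝ := ∑ a, r a * Real.log (r a / q a)

/-- The extended-real value of a term `−a · log q`: it is `+∞` if `a > 0` and `q = 0`. -/
def nlogE (a q : ℝ) : EReal := if 0 < a ∧ q = 0 then ⊤ else ((-(a * Real.log q) : ℝ) : EReal)

variable {Y1 Y2 U1 U2 : Type} [Fintype Y1] [Fintype Y2] [Fintype U1] [Fintype U2]

/-- The joint pmf `p(y₁,y₂,u₁,u₂) = p(y₁,y₂)p(u₁|y₁)p(u₂|y₂)` induced by the source `pY`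
and a test-channel pair `(p1, p2)`. -/
def btJoint (pY : Y1 × Y2 → ℝ) (p1 : Y1 → U1 → ℝ) (p2 : Y2 → U2 → ℝ) :
    Y1 × Y2 × U1 × U2 → ℝ :=
  fun z => pY (z.1, z.2.1) * p1 z.1 z.2.2.1 * p2 z.2.1 z.2.2.2

/-- Marginal `p(y₁,u₁,u₂)`. -/
def bY1U (j : Y1 × Y2 × U1 × U2 → ℝ) : Y1 × U1 × U2 → ℝ :=
  fun z => ∑ y2, j (z.1, y2, z.2.1, z.2.2)

/-- Marginal `p(y₂,u₁,u₂)`. -/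
def bY2U (j : Y1 × Y2 × U1 × U2 → ℝ) : Y2 × U1 × U2 → ℝ :=
  fun z => ∑ y1, j (y1, z.1, z.2.1, z.2.2)

/-- Marginal `p(u₁,u₂)`. -/
def bU12 (j : Y1 × Y2 × U1 × U2 → ℝ) : U1 × U2 → ℝ :=
  fun u => ∑ y1, bY1U j (y1, u.1, u.2)

/-- Marginal `p(u₂)`. -/
def bU2 (j : Y1 × Y2 × U1 × U2 → ℝ) : U2 → ℝ := fun u2 => ∑ u1, bU12 j (u1, u2)

/-- Marginal `p(u₁)`. -/
def bU1 (j : Y1 × Y2 × U1 × U2 → ℝ) : U1 → ℝ := fun u1 => ∑ u2, bU12 j (u1, u2)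

/-- Marginal `p(y₁,u₂)`. -/
def bY1U2 (j : Y1 × Y2 × U1 × U2 → ℝ) : Y1 × U2 → ℝ :=
  fun z => ∑ u1, bY1U j (z.1, u1, z.2)

/-- Marginal `p(y₂,u₂)`. -/
def bY2U2 (j : Y1 × Y2 × U1 × U2 → ℝ) : Y2 × U2 → ℝ :=
  fun z => ∑ u1, bY2U j (z.1, u1, z.2)

/-- Marginal `p(y₂,u₁)`. -/
def bY2U1 (j : Y1 × Y2 × U1 × U2 → ℝ) : Y2 × U1 → ℝ :=
  fun z => ∑ u2, bY2U j (z.1, z.2, u2)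

/-- Marginal `p(y₁,u₁)`. -/
def bY1U1 (j : Y1 × Y2 × U1 × U2 → ℝ) : Y1 × U1 → ℝ :=
  fun z => ∑ u2, bY1U j (z.1, z.2, u2)

/-- Marginal `p(y₁)`. -/
def bY1 (j : Y1 × Y2 × U1 × U2 → ℝ) : Y1 → ℝ := fun y1 => ∑ u2, bY1U2 j (y1, u2)

/-- Marginal `p(y₂)`. -/
def bY2 (j : Y1 × Y2 × U1 × U2 → ℝ) : Y2 → ℝ := fun y2 => ∑ u2, bY2U2 j (y2, u2)

/-- Conditional entropy `H(Y₁|U₁,U₂)`. -/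
def bH1 (j : Y1 × Y2 × U1 × U2 → ℝ) : ℝ := ent (bY1U j) - ent (bU12 j)

/-- Conditional entropy `H(Y₂|U₁,U₂)`. -/
def bH2 (j : Y1 × Y2 × U1 × U2 → ℝ) : ℝ := ent (bY2U j) - ent (bU12 j)

/-- Conditional mutual information `I(Y₁;U₁|U₂)`. -/
def bI1c (j : Y1 × Y2 × U1 × U2 → ℝ) : ℝ :=
  ent (bY1U2 j) + ent (bU12 j) - ent (bU2 j) - ent (bY1U j)

/-- Mutual information `I(Y₂;U₂)`. -/
def bI2m (j : Y1 × Y2 × U1 × U2 → ℝ) : ℝ := ent (bY2 j) + ent (bU2 j) - ent (bY2U2 j)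

/-- Conditional mutual information `I(Y₂;U₂|U₁)`. -/
def bI2c (j : Y1 × Y2 × U1 × U2 → ℝ) : ℝ :=
  ent (bY2U1 j) + ent (bU12 j) - ent (bU1 j) - ent (bY2U j)

/-- Mutual information `I(Y₁;U₁)`. -/
def bI1m (j : Y1 × Y2 × U1 × U2 → ℝ) : ℝ := ent (bY1 j) + ent (bU1 j) - ent (bY1U1 j)

/-- The functional
`F_β(P) = α H(Y₁|U₁,U₂) + (1−α) H(Y₂|U₁,U₂) + s₁ I(Y₁;U₁|U₂) + s₂ I(Y₂;U₂)`. -/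
def Fb (s1 s2 a : ℝ) (j : Y1 × Y2 × U1 × U2 → ℝ) : ℝ :=
  a * bH1 j + (1 - a) * bH2 j + s1 * bI1c j + s2 * bI2m j

/-- `D¹_{BT,α}(R₁,R₂)`: the minimal `α H(Y₁|U₁,U₂) + (1−α) H(Y₂|U₁,U₂)` over test-channel
pairs into `V1`, `V2`, subject to `I(Y₁;U₁|U₂) ≤ R₁` and `I(Y₂;U₂) ≤ R₂`. -/
def Dbt1 (V1 V2 : Type) [Fintype V1] [Fintype V2]
    (pY : Y1 × Y2 → ℝ) (a R1 R2 : ℝ) : ℝ :=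
  sInf {d : ℝ | ∃ p1 : Y1 → V1 → ℝ, ∃ p2 : Y2 → V2 → ℝ, IsChan p1 ∧ IsChan p2 ∧
    bI1c (btJoint pY p1 p2) ≤ R1 ∧ bI2m (btJoint pY p1 p2) ≤ R2 ∧
    d = a * bH1 (btJoint pY p1 p2) + (1 - a) * bH2 (btJoint pY p1 p2)}

/-- `D²_{BT,α}(R₁,R₂)`: the minimal `α H(Y₁|U₁,U₂) + (1−α) H(Y₂|U₁,U₂)` subject to
`I(Y₂;U₂|U₁) ≤ R₂` and `I(Y₁;U₁) ≤ R₁`. -/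
def Dbt2 (V1 V2 : Type) [Fintype V1] [Fintype V2]
    (pY : Y1 × Y2 → ℝ) (a R1 R2 : ℝ) : ℝ :=
  sInf {d : ℝ | ∃ p1 : Y1 → V1 → ℝ, ∃ p2 : Y2 → V2 → ℝ, IsChan p1 ∧ IsChan p2 ∧
    bI2c (btJoint pY p1 p2) ≤ R2 ∧ bI1m (btJoint pY p1 p2) ≤ R1 ∧
    d = a * bH1 (btJoint pY p1 p2) + (1 - a) * bH2 (btJoint pY p1 p2)}

/-- Source marginal `p(y₁)`. -/
def bpY1 (pY : Y1 × Y2 → ℝ) : Y1 → ℝ := fun y1 => ∑ y2, pY (y1, y2)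

/-- Source marginal `p(y₂)`. -/
def bpY2 (pY : Y1 × Y2 → ℝ) : Y2 → ℝ := fun y2 => ∑ y1, pY (y1, y2)

/-- Induced marginal `p(u₂) = Σ_{y₂} p(y₂) p(u₂|y₂)`. -/
def bpU2m (pY : Y1 × Y2 → ℝ) (p2 : Y2 → U2 → ℝ) : U2 → ℝ :=
  fun u2 => ∑ y2, bpY2 pY y2 * p2 y2 u2

/-- Induced joint `p(u₁,u₂,y₁) = Σ_{y₂} p(y₁,y₂) p(u₁|y₁) p(u₂|y₂)`. -/
def bpUUY1 (pY : Y1 × Y2 → ℝ) (p1 : Y1 → U1 → ℝ) (p2 : Y2 → U2 → ℝ) :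
    U1 × U2 × Y1 → ℝ :=
  fun z => ∑ y2, pY (z.2.2, y2) * p1 z.2.2 z.1 * p2 y2 z.2.1

/-- Induced joint `p(u₁,u₂,y₂) = Σ_{y₁} p(y₁,y₂) p(u₁|y₁) p(u₂|y₂)`. -/
def bpUUY2 (pY : Y1 × Y2 → ℝ) (p1 : Y1 → U1 → ℝ) (p2 : Y2 → U2 → ℝ) :
    U1 × U2 × Y2 → ℝ :=
  fun z => ∑ y1, pY (y1, z.2.2) * p1 y1 z.1 * p2 z.2.2 z.2.1

/-- Induced marginal `p(u₁,u₂)`. -/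
def bpUU (pY : Y1 × Y2 → ℝ) (p1 : Y1 → U1 → ℝ) (p2 : Y2 → U2 → ℝ) : U1 × U2 → ℝ :=
  fun u => ∑ y1, bpUUY1 pY p1 p2 (u.1, u.2, y1)

/-- The multiterminal Blahut–Arimoto functional `F_β(P,Q)` (real-valued version;
the convention `0 · log 0 = 0` is automatic since vanishing coefficients kill terms). -/
def FbPQ (s1 s2 a : ℝ) (pY : Y1 × Y2 → ℝ) (p1 : Y1 → U1 → ℝ) (p2 : Y2 → U2 → ℝ)
    (qY1 : U1 × U2 → Y1 → ℝ) (qY2 : U1 × U2 → Y2 → ℝ)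
    (qUU : U1 × U2 → ℝ) (qU2 : U2 → ℝ) : ℝ :=
  s1 * (∑ u1, ∑ y1, p1 y1 u1 * bpY1 pY y1 * Real.log (p1 y1 u1))
  + s2 * (∑ u2, ∑ y2, p2 y2 u2 * bpY2 pY y2 * Real.log (p2 y2 u2))
  + s1 * (∑ u2, bpU2m pY p2 u2 * Real.log (bpU2m pY p2 u2))
  - s2 * (∑ u2, bpU2m pY p2 u2 * Real.log (qU2 u2))
  - a * (∑ u1, ∑ u2, ∑ y1, bpUUY1 pY p1 p2 (u1, u2, y1) * Real.log (qY1 (u1, u2) y1))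
  - (1 - a) * (∑ u1, ∑ u2, ∑ y2, bpUUY2 pY p1 p2 (u1, u2, y2) * Real.log (qY2 (u1, u2) y2))
  - s1 * (∑ u1, ∑ u2, bpUU pY p1 p2 (u1, u2) * Real.log (qUU (u1, u2)))

/-- The multiterminal Blahut–Arimoto functional `F_β(P,Q)`, with values in `ℝ ∪ {+∞}`
(a term `−a log q` with positive coefficient and `q = 0` is `+∞`). -/
def FbPQE (s1 s2 a : ℝ) (pY : Y1 × Y2 → ℝ) (p1 : Y1 → U1 → ℝ) (p2 : Y2 → U2 → ℝ)
    (qY1 : U1 × U2 → Y1 → ℝ) (qY2 : U1 × U2 → Y2 → ℝ)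
    (qUU : U1 × U2 → ℝ) (qU2 : U2 → ℝ) : EReal :=
  ((s1 * (∑ u1, ∑ y1, p1 y1 u1 * bpY1 pY y1 * Real.log (p1 y1 u1))
    + s2 * (∑ u2, ∑ y2, p2 y2 u2 * bpY2 pY y2 * Real.log (p2 y2 u2))
    + s1 * (∑ u2, bpU2m pY p2 u2 * Real.log (bpU2m pY p2 u2)) : ℝ) : EReal)
  + (∑ u2, nlogE (s2 * bpU2m pY p2 u2) (qU2 u2))
  + (∑ u1, ∑ u2, ∑ y1, nlogE (a * bpUUY1 pY p1 p2 (u1, u2, y1)) (qY1 (u1, u2) y1))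
  + (∑ u1, ∑ u2, ∑ y2, nlogE ((1 - a) * bpUUY2 pY p1 p2 (u1, u2, y2)) (qY2 (u1, u2) y2))
  + (∑ u1, ∑ u2, nlogE (s1 * bpUU pY p1 p2 (u1, u2)) (qUU (u1, u2)))

/-- The exponent `μ₂(u₂,y₂)` of Lemma 5:
`μ₂(u₂,y₂) = (α/s₂) Σ_{u₁,y₁} p(y₁|y₂) p(u₁|y₁) log q(y₁|u₁,u₂)
           + (ᾱ/s₂) Σ_{u₁} p(u₁|y₂) log q(y₂|u₁,u₂)
           + (s₁/s₂) Σ_{u₁} p(u₁|y₂) log q(u₁,u₂) + log q(u₂) − (s₁/s₂) log p(u₂)`,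
with `p(y₁|y₂) = p(y₁,y₂)/p(y₂)`, `p(u₁|y₂) = Σ_{y₁} p(y₁|y₂) p(u₁|y₁)`, and
`p(u₂) = Σ_{y₂} p(y₂) p(u₂|y₂)` the marginal induced by the (current) `P_{U₂|Y₂}`. -/
def mu2 (s1 s2 a : ℝ) (pY : Y1 × Y2 → ℝ) (p1 : Y1 → U1 → ℝ) (p2 : Y2 → U2 → ℝ)
    (qY1 : U1 × U2 → Y1 → ℝ) (qY2 : U1 × U2 → Y2 → ℝ)
    (qUU : U1 × U2 → ℝ) (qU2 : U2 → ℝ)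
    (u2 : U2) (y2 : Y2) : ℝ :=
  (a / s2) * (∑ u1, ∑ y1, (pY (y1, y2) / bpY2 pY y2) * p1 y1 u1
      * Real.log (qY1 (u1, u2) y1))
  + ((1 - a) / s2) * (∑ u1, (∑ y1, (pY (y1, y2) / bpY2 pY y2) * p1 y1 u1)
      * Real.log (qY2 (u1, u2) y2))
  + (s1 / s2) * (∑ u1, (∑ y1, (pY (y1, y2) / bpY2 pY y2) * p1 y1 u1)
      * Real.log (qUU (u1, u2)))
  + Real.log (qU2 u2) - (s1 / s2) * Real.log (bpU2m pY p2 u2)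


set_option linter.unusedSectionVars false

lemma gibbs_ge (x q : ℝ) (hx : 0 ≤ x) (hq : 0 < q) :
    x - q ≤ x * Real.log x - x * Real.log q := by
  rcases eq_or_lt_of_le hx with h | h
  · simp [← h]; linarith
  · have h1 : Real.log (q / x) ≤ q / x - 1 := Real.log_le_sub_one_of_pos (by positivity)
    rw [Real.log_div (ne_of_gt hq) (ne_of_gt h)] at h1
    have h2 : x * (Real.log q - Real.log x) ≤ x * (q / x - 1) :=
      mul_le_mul_of_nonneg_left h1 h.le
    have h3 : x * (q / x - 1) = q - x := by field_simp
    nlinarith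

lemma gibbs_gt (x q : ℝ) (hx : 0 < x) (hq : 0 < q) (hne : x ≠ q) :
    x - q < x * Real.log x - x * Real.log q := by
  have h1 : Real.log (q / x) < q / x - 1 := by
    refine Real.log_lt_sub_one_of_pos (by positivity) ?_
    intro h
    rw [div_eq_one_iff_eq (ne_of_gt hx)] at h
    exact hne h.symm
  rw [Real.log_div (ne_of_gt hq) (ne_of_gt hx)] at h1
  have h2 : x * (Real.log q - Real.log x) < x * (q / x - 1) :=
    (mul_lt_mul_iff_right₀ hx).mpr h1
  have h3 : x * (q / x - 1) = q - x := by field_simp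
  nlinarith

lemma sum_comm3 {A B C : Type} [Fintype A] [Fintype B] [Fintype C] (f : A → B → C → ℝ) :
    ∑ a, ∑ b, ∑ c, f a b c = ∑ c, ∑ b, ∑ a, f a b c := by
  calc ∑ a, ∑ b, ∑ c, f a b c = ∑ b, ∑ a, ∑ c, f a b c := Finset.sum_comm
    _ = ∑ b, ∑ c, ∑ a, f a b c := Finset.sum_congr rfl fun _ _ => Finset.sum_comm
    _ = ∑ c, ∑ b, ∑ a, f a b c := Finset.sum_comm

lemma sum_perm4 {A B C D : Type} [Fintype A] [Fintype B] [Fintype C] [Fintype D]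
    (f : A → B → C → D → ℝ) :
    ∑ a, ∑ b, ∑ c, ∑ d, f a b c d = ∑ d, ∑ b, ∑ a, ∑ c, f a b c d := by
  calc ∑ a, ∑ b, ∑ c, ∑ d, f a b c d
      = ∑ a, ∑ b, ∑ d, ∑ c, f a b c d :=
        Finset.sum_congr rfl fun _ _ => Finset.sum_congr rfl fun _ _ => Finset.sum_comm
    _ = ∑ a, ∑ d, ∑ b, ∑ c, f a b c d := Finset.sum_congr rfl fun _ _ => Finset.sum_comm
    _ = ∑ d, ∑ a, ∑ b, ∑ c, f a b c d := Finset.sum_comm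
    _ = ∑ d, ∑ b, ∑ a, ∑ c, f a b c d := Finset.sum_congr rfl fun _ _ => Finset.sum_comm

/-- Coefficient of the part of `FbPQ` that is linear in `p₂`. -/
def Kc (s1 s2 a : ℝ) (pY : Y1 × Y2 → ℝ) (p1 : Y1 → U1 → ℝ)
    (qY1 : U1 × U2 → Y1 → ℝ) (qY2 : U1 × U2 → Y2 → ℝ)
    (qUU : U1 × U2 → ℝ) (qU2 : U2 → ℝ) (u2 : U2) (y2 : Y2) : ℝ :=
  a * (∑ u1, ∑ y1, pY (y1, y2) * p1 y1 u1 * Real.log (qY1 (u1, u2) y1))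
  + (1 - a) * (∑ u1, (∑ y1, pY (y1, y2) * p1 y1 u1) * Real.log (qY2 (u1, u2) y2))
  + s1 * (∑ u1, (∑ y1, pY (y1, y2) * p1 y1 u1) * Real.log (qUU (u1, u2)))
  + s2 * (bpY2 pY y2 * Real.log (qU2 u2))

lemma mu2_mul (s1 s2 a : ℝ) (pY : Y1 × Y2 → ℝ) (p1 : Y1 → U1 → ℝ)
    (p2 : Y2 → U2 → ℝ)
    (qY1 : U1 × U2 → Y1 → ℝ) (qY2 : U1 × U2 → Y2 → ℝ)
    (qUU : U1 × U2 → ℝ) (qU2 : U2 → ℝ) (u2 : U2) (y2 : Y2)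
    (hs2 : s2 ≠ 0) (hP : bpY2 pY y2 ≠ 0) :
    bpY2 pY y2 * (s2 * mu2 s1 s2 a pY p1 p2 qY1 qY2 qUU qU2 u2 y2)
    = Kc s1 s2 a pY p1 qY1 qY2 qUU qU2 u2 y2
      - s1 * (bpY2 pY y2 * Real.log (bpU2m pY p2 u2)) := by
  have hw : ∀ u1 : U1, bpY2 pY y2 * (∑ y1, (pY (y1, y2) / bpY2 pY y2) * p1 y1 u1)
      = ∑ y1, pY (y1, y2) * p1 y1 u1 := fun u1 => by
    rw [Finset.mul_sum]
    exact Finset.sum_congr rfl fun y1 _ => by field_simp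
  have hA : bpY2 pY y2 * (∑ u1, ∑ y1, (pY (y1, y2) / bpY2 pY y2) * p1 y1 u1
        * Real.log (qY1 (u1, u2) y1))
      = ∑ u1, ∑ y1, pY (y1, y2) * p1 y1 u1 * Real.log (qY1 (u1, u2) y1) := by
    rw [Finset.mul_sum]
    refine Finset.sum_congr rfl fun u1 _ => ?_
    rw [Finset.mul_sum]
    refine Finset.sum_congr rfl fun y1 _ => ?_
    field_simp
  have hB : bpY2 pY y2 * (∑ u1, (∑ y1, (pY (y1, y2) / bpY2 pY y2) * p1 y1 u1)
        * Real.log (qY2 (u1, u2) y2))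
      = ∑ u1, (∑ y1, pY (y1, y2) * p1 y1 u1) * Real.log (qY2 (u1, u2) y2) := by
    rw [Finset.mul_sum]
    exact Finset.sum_congr rfl fun u1 _ => by rw [← mul_assoc, hw u1]
  have hC : bpY2 pY y2 * (∑ u1, (∑ y1, (pY (y1, y2) / bpY2 pY y2) * p1 y1 u1)
        * Real.log (qUU (u1, u2)))
      = ∑ u1, (∑ y1, pY (y1, y2) * p1 y1 u1) * Real.log (qUU (u1, u2)) := by
    rw [Finset.mul_sum]
    exact Finset.sum_congr rfl fun u1 _ => by rw [← mul_assoc, hw u1]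
  simp only [mu2, Kc]
  rw [← hA, ← hB, ← hC]
  field_simp


set_option linter.unusedSectionVars false

lemma FbPQ_form (s1 s2 a : ℝ) (pY : Y1 × Y2 → ℝ) (p1 : Y1 → U1 → ℝ)
    (qY1 : U1 × U2 → Y1 → ℝ) (qY2 : U1 × U2 → Y2 → ℝ)
    (qUU : U1 × U2 → ℝ) (qU2 : U2 → ℝ) (x : Y2 → U2 → ℝ) :
    FbPQ s1 s2 a pY p1 x qY1 qY2 qUU qU2
    = s1 * (∑ u1, ∑ y1, p1 y1 u1 * bpY1 pY y1 * Real.log (p1 y1 u1))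
      + s2 * (∑ y2, ∑ u2, bpY2 pY y2 * (x y2 u2 * Real.log (x y2 u2)))
      + s1 * (∑ u2, bpU2m pY x u2 * Real.log (bpU2m pY x u2))
      - ∑ y2, ∑ u2, x y2 u2 * Kc s1 s2 a pY p1 qY1 qY2 qUU qU2 u2 y2 := by
  have h2 : (∑ u2, ∑ y2, x y2 u2 * bpY2 pY y2 * Real.log (x y2 u2))
      = ∑ y2, ∑ u2, bpY2 pY y2 * (x y2 u2 * Real.log (x y2 u2)) := by
    rw [Finset.sum_comm]
    exact Finset.sum_congr rfl fun y2 _ => Finset.sum_congr rfl fun u2 _ => by ring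
  have h4 : (∑ u2, bpU2m pY x u2 * Real.log (qU2 u2))
      = ∑ y2, ∑ u2, x y2 u2 * (bpY2 pY y2 * Real.log (qU2 u2)) := by
    simp only [bpU2m, Finset.sum_mul]
    rw [Finset.sum_comm]
    exact Finset.sum_congr rfl fun y2 _ => Finset.sum_congr rfl fun u2 _ => by ring
  have h5 : (∑ u1, ∑ u2, ∑ y1, bpUUY1 pY p1 x (u1, u2, y1) * Real.log (qY1 (u1, u2) y1))
      = ∑ y2, ∑ u2, x y2 u2 *
          (∑ u1, ∑ y1, pY (y1, y2) * p1 y1 u1 * Real.log (qY1 (u1, u2) y1)) := by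
    simp only [bpUUY1, Finset.sum_mul]
    rw [sum_perm4 (fun u1 u2 y1 y2 =>
      pY (y1, y2) * p1 y1 u1 * x y2 u2 * Real.log (qY1 (u1, u2) y1))]
    refine Finset.sum_congr rfl fun y2 _ => Finset.sum_congr rfl fun u2 _ => ?_
    rw [Finset.mul_sum]
    refine Finset.sum_congr rfl fun u1 _ => ?_
    rw [Finset.mul_sum]
    exact Finset.sum_congr rfl fun y1 _ => by ring
  have h6 : (∑ u1, ∑ u2, ∑ y2, bpUUY2 pY p1 x (u1, u2, y2) * Real.log (qY2 (u1, u2) y2))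
      = ∑ y2, ∑ u2, x y2 u2 *
          (∑ u1, (∑ y1, pY (y1, y2) * p1 y1 u1) * Real.log (qY2 (u1, u2) y2)) := by
    simp only [bpUUY2]
    rw [sum_comm3 (fun u1 u2 y2 =>
      (∑ y1, pY (y1, y2) * p1 y1 u1 * x y2 u2) * Real.log (qY2 (u1, u2) y2))]
    refine Finset.sum_congr rfl fun y2 _ => Finset.sum_congr rfl fun u2 _ => ?_
    rw [Finset.mul_sum]
    refine Finset.sum_congr rfl fun u1 _ => ?_
    rw [Finset.sum_mul, Finset.sum_mul, Finset.mul_sum]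
    exact Finset.sum_congr rfl fun y1 _ => by ring
  have h7 : (∑ u1, ∑ u2, bpUU pY p1 x (u1, u2) * Real.log (qUU (u1, u2)))
      = ∑ y2, ∑ u2, x y2 u2 *
          (∑ u1, (∑ y1, pY (y1, y2) * p1 y1 u1) * Real.log (qUU (u1, u2))) := by
    simp only [bpUU, bpUUY1, Finset.sum_mul]
    have : ∀ u1 : U1, ∀ u2 : U2,
        (∑ y1, ∑ y2, pY (y1, y2) * p1 y1 u1 * x y2 u2 * Real.log (qUU (u1, u2)))
        = ∑ y2, ∑ y1, pY (y1, y2) * p1 y1 u1 * x y2 u2 * Real.log (qUU (u1, u2)) :=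
      fun _ _ => Finset.sum_comm
    calc (∑ u1, ∑ u2, ∑ y1, ∑ y2, pY (y1, y2) * p1 y1 u1 * x y2 u2 * Real.log (qUU (u1, u2)))
        = ∑ y2, ∑ u2, ∑ u1, ∑ y1,
            pY (y1, y2) * p1 y1 u1 * x y2 u2 * Real.log (qUU (u1, u2)) :=
          sum_perm4 (fun u1 u2 y1 y2 =>
            pY (y1, y2) * p1 y1 u1 * x y2 u2 * Real.log (qUU (u1, u2)))
      _ = _ := by
          refine Finset.sum_congr rfl fun y2 _ => Finset.sum_congr rfl fun u2 _ => ?_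
          rw [Finset.mul_sum]
          refine Finset.sum_congr rfl fun u1 _ => ?_
          rw [Finset.mul_sum]
          exact Finset.sum_congr rfl fun y1 _ => by ring
  have split : ∀ f g : Y2 → U2 → ℝ, (∑ y2, ∑ u2, (f y2 u2 + g y2 u2))
      = (∑ y2, ∑ u2, f y2 u2) + (∑ y2, ∑ u2, g y2 u2) := fun f g => by
    rw [← Finset.sum_add_distrib]
    exact Finset.sum_congr rfl fun _ _ => Finset.sum_add_distrib
  have pull : ∀ (c : ℝ) (f : Y2 → U2 → ℝ), (∑ y2, ∑ u2, c * f y2 u2)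
      = c * ∑ y2, ∑ u2, f y2 u2 := fun c f => by
    rw [Finset.mul_sum]
    exact Finset.sum_congr rfl fun _ _ => (Finset.mul_sum _ _ _).symm
  have hK : (∑ y2, ∑ u2, x y2 u2 * Kc s1 s2 a pY p1 qY1 qY2 qUU qU2 u2 y2)
      = a * (∑ y2, ∑ u2, x y2 u2 *
            (∑ u1, ∑ y1, pY (y1, y2) * p1 y1 u1 * Real.log (qY1 (u1, u2) y1)))
        + (1 - a) * (∑ y2, ∑ u2, x y2 u2 *
            (∑ u1, (∑ y1, pY (y1, y2) * p1 y1 u1) * Real.log (qY2 (u1, u2) y2)))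
        + s1 * (∑ y2, ∑ u2, x y2 u2 *
            (∑ u1, (∑ y1, pY (y1, y2) * p1 y1 u1) * Real.log (qUU (u1, u2))))
        + s2 * (∑ y2, ∑ u2, x y2 u2 * (bpY2 pY y2 * Real.log (qU2 u2))) := by
    have hpoint : ∀ y2 u2, x y2 u2 * Kc s1 s2 a pY p1 qY1 qY2 qUU qU2 u2 y2
        = a * (x y2 u2 *
              (∑ u1, ∑ y1, pY (y1, y2) * p1 y1 u1 * Real.log (qY1 (u1, u2) y1)))
          + ((1 - a) * (x y2 u2 *
              (∑ u1, (∑ y1, pY (y1, y2) * p1 y1 u1) * Real.log (qY2 (u1, u2) y2)))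
          + (s1 * (x y2 u2 *
              (∑ u1, (∑ y1, pY (y1, y2) * p1 y1 u1) * Real.log (qUU (u1, u2))))
          + s2 * (x y2 u2 * (bpY2 pY y2 * Real.log (qU2 u2))))) := fun y2 u2 => by
      simp only [Kc]; ring
    calc (∑ y2, ∑ u2, x y2 u2 * Kc s1 s2 a pY p1 qY1 qY2 qUU qU2 u2 y2)
        = ∑ y2, ∑ u2, (a * (x y2 u2 *
              (∑ u1, ∑ y1, pY (y1, y2) * p1 y1 u1 * Real.log (qY1 (u1, u2) y1)))
          + ((1 - a) * (x y2 u2 *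
              (∑ u1, (∑ y1, pY (y1, y2) * p1 y1 u1) * Real.log (qY2 (u1, u2) y2)))
          + (s1 * (x y2 u2 *
              (∑ u1, (∑ y1, pY (y1, y2) * p1 y1 u1) * Real.log (qUU (u1, u2))))
          + s2 * (x y2 u2 * (bpY2 pY y2 * Real.log (qU2 u2)))))) :=
          Finset.sum_congr rfl fun y2 _ => Finset.sum_congr rfl fun u2 _ => hpoint y2 u2
      _ = _ := by
          rw [split, split, split, pull, pull, pull, pull]
          ring
  rw [FbPQ, h2, h4, h5, h6, h7, hK]
  ring


lemma FbPQ_sub (s1 s2 a : ℝ) (pY : Y1 × Y2 → ℝ) (p1 : Y1 → U1 → ℝ)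
    (qY1 : U1 × U2 → Y1 → ℝ) (qY2 : U1 × U2 → Y2 → ℝ)
    (qUU : U1 × U2 → ℝ) (qU2 : U2 → ℝ) (p2 r : Y2 → U2 → ℝ)
    (hs2 : s2 ≠ 0) (hP : ∀ y2, bpY2 pY y2 ≠ 0) :
    FbPQ s1 s2 a pY p1 r qY1 qY2 qUU qU2 - FbPQ s1 s2 a pY p1 p2 qY1 qY2 qUU qU2
    = s2 * (∑ y2, bpY2 pY y2 * ∑ u2, (r y2 u2 * Real.log (r y2 u2)
          - p2 y2 u2 * Real.log (p2 y2 u2)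
          - (r y2 u2 - p2 y2 u2) * mu2 s1 s2 a pY p1 p2 qY1 qY2 qUU qU2 u2 y2))
      + s1 * (∑ u2, bpU2m pY r u2 *
          (Real.log (bpU2m pY r u2) - Real.log (bpU2m pY p2 u2))) := by
  have split : ∀ f g : Y2 → U2 → ℝ, (∑ y2, ∑ u2, (f y2 u2 + g y2 u2))
      = (∑ y2, ∑ u2, f y2 u2) + (∑ y2, ∑ u2, g y2 u2) := fun f g => by
    rw [← Finset.sum_add_distrib]
    exact Finset.sum_congr rfl fun _ _ => Finset.sum_add_distrib
  have pull : ∀ (c : ℝ) (f : Y2 → U2 → ℝ), (∑ y2, ∑ u2, c * f y2 u2)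
      = c * ∑ y2, ∑ u2, f y2 u2 := fun c f => by
    rw [Finset.mul_sum]
    exact Finset.sum_congr rfl fun _ _ => (Finset.mul_sum _ _ _).symm
  have hpt : ∀ y2 u2, s2 * (bpY2 pY y2 * (r y2 u2 * Real.log (r y2 u2)
          - p2 y2 u2 * Real.log (p2 y2 u2)
          - (r y2 u2 - p2 y2 u2) * mu2 s1 s2 a pY p1 p2 qY1 qY2 qUU qU2 u2 y2))
      = s2 * (bpY2 pY y2 * (r y2 u2 * Real.log (r y2 u2)))
        + ((-s2) * (bpY2 pY y2 * (p2 y2 u2 * Real.log (p2 y2 u2)))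
        + ((-1) * (r y2 u2 * Kc s1 s2 a pY p1 qY1 qY2 qUU qU2 u2 y2)
        + ((1 : ℝ) * (p2 y2 u2 * Kc s1 s2 a pY p1 qY1 qY2 qUU qU2 u2 y2)
        + (s1 * (bpY2 pY y2 * (r y2 u2 * Real.log (bpU2m pY p2 u2)))
        + (-s1) * (bpY2 pY y2 * (p2 y2 u2 * Real.log (bpU2m pY p2 u2))))))) := by
    intro y2 u2
    linear_combination (p2 y2 u2 - r y2 u2) *
      mu2_mul s1 s2 a pY p1 p2 qY1 qY2 qUU qU2 u2 y2 hs2 (hP y2)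
  have hconv : s2 * (∑ y2, bpY2 pY y2 * ∑ u2, (r y2 u2 * Real.log (r y2 u2)
          - p2 y2 u2 * Real.log (p2 y2 u2)
          - (r y2 u2 - p2 y2 u2) * mu2 s1 s2 a pY p1 p2 qY1 qY2 qUU qU2 u2 y2))
      = ∑ y2, ∑ u2, s2 * (bpY2 pY y2 * (r y2 u2 * Real.log (r y2 u2)
          - p2 y2 u2 * Real.log (p2 y2 u2)
          - (r y2 u2 - p2 y2 u2) * mu2 s1 s2 a pY p1 p2 qY1 qY2 qUU qU2 u2 y2)) := by
    rw [Finset.mul_sum]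
    refine Finset.sum_congr rfl fun y2 _ => ?_
    rw [Finset.mul_sum, Finset.mul_sum]
  have hEr : (∑ y2, ∑ u2, bpY2 pY y2 * (r y2 u2 * Real.log (bpU2m pY p2 u2)))
      = ∑ u2, bpU2m pY r u2 * Real.log (bpU2m pY p2 u2) := by
    rw [Finset.sum_comm]
    refine Finset.sum_congr rfl fun u2 _ => ?_
    have hr : bpU2m pY r u2 = ∑ y2, bpY2 pY y2 * r y2 u2 := rfl
    rw [hr, Finset.sum_mul]
    exact Finset.sum_congr rfl fun y2 _ => by ring
  have hEp : (∑ y2, ∑ u2, bpY2 pY y2 * (p2 y2 u2 * Real.log (bpU2m pY p2 u2)))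
      = ∑ u2, bpU2m pY p2 u2 * Real.log (bpU2m pY p2 u2) := by
    rw [Finset.sum_comm]
    refine Finset.sum_congr rfl fun u2 _ => ?_
    have hr : bpU2m pY p2 u2 = ∑ y2, bpY2 pY y2 * p2 y2 u2 := rfl
    rw [hr, Finset.sum_mul]
    exact Finset.sum_congr rfl fun y2 _ => by ring
  have hsnd : (∑ u2, bpU2m pY r u2 *
        (Real.log (bpU2m pY r u2) - Real.log (bpU2m pY p2 u2)))
      = (∑ u2, bpU2m pY r u2 * Real.log (bpU2m pY r u2))
        - ∑ u2, bpU2m pY r u2 * Real.log (bpU2m pY p2 u2) := by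
    rw [← Finset.sum_sub_distrib]
    exact Finset.sum_congr rfl fun u2 _ => by ring
  have hbig := hconv.trans ((Finset.sum_congr rfl fun y2 _ =>
    Finset.sum_congr rfl fun u2 _ => hpt y2 u2).trans (by
      rw [split, split, split, split, split, pull, pull, pull, pull, pull, pull]))
  rw [FbPQ_form s1 s2 a pY p1 qY1 qY2 qUU qU2 r,
    FbPQ_form s1 s2 a pY p1 qY1 qY2 qUU qU2 p2, hbig, hsnd, hEr, hEp]
  ring

set_option maxHeartbeats 1000000 in
/-- **Lemma 5, fixed-point characterization of the optimal `P_{U₂|Y₂}` for fixed `Q` and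
fixed `P_{U₁|Y₁}`** in the multiterminal problem: a strictly positive channel `P_{U₂|Y₂}`
minimizes `P_{U₂|Y₂} ↦ F_β((P_{U₁|Y₁},P_{U₂|Y₂}),Q)` over channels from `Y₂` to `U₂`
iff it satisfies `p(u₂|y₂) = exp μ₂(u₂,y₂) / Σ_{u₂'} exp μ₂(u₂',y₂)` for all `u₂`, `y₂`. -/
theorem bt_fixed_point_P2_for_fixed_Q
    (pY : Y1 × Y2 → ℝ) (hpY : IsPmf pY)
    (s1 s2 a : ℝ) (hs1 : 0 < s1) (hs2 : 0 < s2) (ha0 : 0 ≤ a) (ha1 : a ≤ 1)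
    (qY1 : U1 × U2 → Y1 → ℝ) (qY2 : U1 × U2 → Y2 → ℝ)
    (qUU : U1 × U2 → ℝ) (qU2 : U2 → ℝ)
    (hqY1 : IsChan qY1) (hqY2 : IsChan qY2) (hqUU : IsPmf qUU) (hqU2 : IsPmf qU2)
    (hqY1pos : ∀ u y1, 0 < qY1 u y1) (hqY2pos : ∀ u y2, 0 < qY2 u y2)
    (hqUUpos : ∀ u, 0 < qUU u) (hqU2pos : ∀ u2, 0 < qU2 u2)
    (p1 : Y1 → U1 → ℝ) (hp1 : IsChan p1)
    (hY2pos : ∀ y2, 0 < bpY2 pY y2)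
    (p2 : Y2 → U2 → ℝ) (hp2 : IsChan p2) (hp2pos : ∀ y2 u2, 0 < p2 y2 u2) :
    (∀ p2' : Y2 → U2 → ℝ, IsChan p2' →
        FbPQ s1 s2 a pY p1 p2 qY1 qY2 qUU qU2
          ≤ FbPQ s1 s2 a pY p1 p2' qY1 qY2 qUU qU2) ↔
    (∀ u2 y2, p2 y2 u2
      = Real.exp (mu2 s1 s2 a pY p1 p2 qY1 qY2 qUU qU2 u2 y2)
        / ∑ u2' : U2, Real.exp (mu2 s1 s2 a pY p1 p2 qY1 qY2 qUU qU2 u2' y2)) := by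
  set M : U2 → Y2 → ℝ := mu2 s1 s2 a pY p1 p2 qY1 qY2 qUU qU2 with hM
  -- basic nonemptiness
  have hY2ne : Nonempty Y2 := by
    by_contra h
    rw [not_nonempty_iff] at h
    have h2 := hpY.2
    rw [Finset.univ_eq_empty, Finset.sum_empty] at h2
    exact one_ne_zero h2.symm
  have hU2ne : Nonempty U2 := by
    by_contra h
    rw [not_nonempty_iff] at h
    have h2 := (hp2 (Classical.arbitrary Y2)).2
    rw [Finset.univ_eq_empty, Finset.sum_empty] at h2
    exact one_ne_zero h2.symm
  -- source marginal sums to one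
  have hPsum : ∑ y2, bpY2 pY y2 = 1 := by
    have : ∑ y2, bpY2 pY y2 = ∑ y2, ∑ y1, pY (y1, y2) := rfl
    rw [this, Finset.sum_comm, ← Fintype.sum_prod_type]
    exact hpY.2
  have hPne : ∀ y2, bpY2 pY y2 ≠ 0 := fun y2 => ne_of_gt (hY2pos y2)
  -- induced marginal of any channel sums to one and is nonnegative
  have hmsum : ∀ x : Y2 → U2 → ℝ, IsChan x → ∑ u2, bpU2m pY x u2 = 1 := by
    intro x hx
    have e : (∑ u2, bpU2m pY x u2) = ∑ u2, ∑ y2, bpY2 pY y2 * x y2 u2 := rfl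
    rw [e, Finset.sum_comm]
    calc ∑ y2, ∑ u2, bpY2 pY y2 * x y2 u2 = ∑ y2, bpY2 pY y2 :=
          Finset.sum_congr rfl fun y2 _ => by rw [← Finset.mul_sum, (hx y2).2, mul_one]
      _ = 1 := hPsum
  have hmnn : ∀ (x : Y2 → U2 → ℝ), (∀ y2 u2, 0 ≤ x y2 u2) → ∀ u2, 0 ≤ bpU2m pY x u2 :=
    fun x hx u2 => Finset.sum_nonneg fun y2 _ =>
      mul_nonneg (le_of_lt (hY2pos y2)) (hx y2 u2)
  have hmpos : ∀ u2, 0 < bpU2m pY p2 u2 := fun u2 =>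
    Finset.sum_pos (fun y2 _ => mul_pos (hY2pos y2) (hp2pos y2 u2)) Finset.univ_nonempty
  -- the partition function
  have hZpos : ∀ y2, (0 : ℝ) < ∑ u2' : U2, Real.exp (M u2' y2) := fun y2 =>
    Finset.sum_pos (fun _ _ => Real.exp_pos _) Finset.univ_nonempty
  constructor
  · -- minimality → fixed point : contrapositive
    intro hmin
    by_contra hfpn
    push_neg at hfpn
    obtain ⟨u0, y0, hne0⟩ := hfpn
    set σ : Y2 → U2 → ℝ :=
      fun y2 u2 => Real.exp (M u2 y2) / ∑ u2' : U2, Real.exp (M u2' y2) with hσ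
    have hσpos : ∀ y2 u2, 0 < σ y2 u2 := fun y2 u2 =>
      div_pos (Real.exp_pos _) (hZpos y2)
    have hσchan : IsChan σ := by
      intro y2
      constructor
      · exact fun u2 => le_of_lt (hσpos y2 u2)
      · rw [hσ]
        rw [← Finset.sum_div]
        exact div_self (ne_of_gt (hZpos y2))
    have hlogσ : ∀ u2 y2, Real.log (σ y2 u2)
        = M u2 y2 - Real.log (∑ u2' : U2, Real.exp (M u2' y2)) := by
      intro u2 y2
      rw [hσ]
      rw [Real.log_div (ne_of_gt (Real.exp_pos _)) (ne_of_gt (hZpos y2)), Real.log_exp]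
    -- the strict Gibbs gap
    set K : ℝ := ∑ y2, bpY2 pY y2 *
      ∑ u2, p2 y2 u2 * (Real.log (p2 y2 u2) - Real.log (σ y2 u2)) with hK
    have hinnernn : ∀ y2, 0 ≤ ∑ u2, p2 y2 u2 * (Real.log (p2 y2 u2) - Real.log (σ y2 u2)) := by
      intro y2
      have hzero : ∑ u2, (p2 y2 u2 - σ y2 u2) = 0 := by
        rw [Finset.sum_sub_distrib, (hp2 y2).2, (hσchan y2).2, sub_self]
      have hle : ∑ u2, (p2 y2 u2 - σ y2 u2)
          ≤ ∑ u2, p2 y2 u2 * (Real.log (p2 y2 u2) - Real.log (σ y2 u2)) := by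
        refine Finset.sum_le_sum fun u2 _ => ?_
        have := gibbs_ge (p2 y2 u2) (σ y2 u2) (le_of_lt (hp2pos y2 u2)) (hσpos y2 u2)
        nlinarith [this]
      linarith
    have hKpos : 0 < K := by
      rw [hK]
      refine Finset.sum_pos' (fun y2 _ => mul_nonneg (le_of_lt (hY2pos y2)) (hinnernn y2))
        ⟨y0, Finset.mem_univ y0, ?_⟩
      refine mul_pos (hY2pos y0) ?_
      have hzero : ∑ u2, (p2 y0 u2 - σ y0 u2) = 0 := by
        rw [Finset.sum_sub_distrib, (hp2 y0).2, (hσchan y0).2, sub_self]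
      have hlt : ∑ u2, (p2 y0 u2 - σ y0 u2)
          < ∑ u2, p2 y0 u2 * (Real.log (p2 y0 u2) - Real.log (σ y0 u2)) := by
        refine Finset.sum_lt_sum (fun u2 _ => ?_) ⟨u0, Finset.mem_univ u0, ?_⟩
        · have := gibbs_ge (p2 y0 u2) (σ y0 u2) (le_of_lt (hp2pos y0 u2)) (hσpos y0 u2)
          nlinarith [this]
        · have := gibbs_gt (p2 y0 u0) (σ y0 u0) (hp2pos y0 u0) (hσpos y0 u0) hne0
          nlinarith [this]
      linarith
    -- the quadratic constant
    set C : ℝ := ∑ u2, (bpU2m pY σ u2 - bpU2m pY p2 u2) ^ 2 / bpU2m pY p2 u2 with hC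
    have hCnn : 0 ≤ C :=
      Finset.sum_nonneg fun u2 _ => div_nonneg (sq_nonneg _) (le_of_lt (hmpos u2))
    -- the step size
    set t : ℝ := min (1/2) (s2 * K / (2 * (s1 * C) + 1)) with ht
    have hden : (0 : ℝ) < 2 * (s1 * C) + 1 := by positivity
    have ht0 : 0 < t := lt_min (by norm_num)
      (div_pos (mul_pos hs2 hKpos) hden)
    have ht12 : t ≤ 1/2 := min_le_left _ _
    have ht1 : t < 1 := lt_of_le_of_lt ht12 (by norm_num)
    have htK : t * (2 * (s1 * C) + 1) ≤ s2 * K := by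
      have := min_le_right (1/2) (s2 * K / (2 * (s1 * C) + 1))
      rw [← ht] at this
      calc t * (2 * (s1 * C) + 1) ≤ (s2 * K / (2 * (s1 * C) + 1)) * (2 * (s1 * C) + 1) :=
            mul_le_mul_of_nonneg_right this (le_of_lt hden)
        _ = s2 * K := by field_simp
    -- the perturbed channel
    set r : Y2 → U2 → ℝ := fun y2 u2 => (1 - t) * p2 y2 u2 + t * σ y2 u2 with hr
    have hrpos : ∀ y2 u2, 0 < r y2 u2 := fun y2 u2 => by
      have := hp2pos y2 u2
      have := hσpos y2 u2
      have h1t : 0 < 1 - t := by linarith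
      rw [hr]
      positivity
    have hrchan : IsChan r := by
      intro y2
      refine ⟨fun u2 => le_of_lt (hrpos y2 u2), ?_⟩
      rw [hr]
      rw [Finset.sum_add_distrib, ← Finset.mul_sum, ← Finset.mul_sum,
        (hp2 y2).2, (hσchan y2).2]
      ring
    -- marginal of r
    have hmr : ∀ u2, bpU2m pY r u2 = bpU2m pY p2 u2
        + t * (bpU2m pY σ u2 - bpU2m pY p2 u2) := by
      intro u2
      have e1 : bpU2m pY r u2 = ∑ y2, bpY2 pY y2 * ((1 - t) * p2 y2 u2 + t * σ y2 u2) := rfl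
      have e2 : bpU2m pY p2 u2 = ∑ y2, bpY2 pY y2 * p2 y2 u2 := rfl
      have e3 : bpU2m pY σ u2 = ∑ y2, bpY2 pY y2 * σ y2 u2 := rfl
      rw [e1, e2, e3, ← Finset.sum_sub_distrib, Finset.mul_sum, ← Finset.sum_add_distrib]
      exact Finset.sum_congr rfl fun y2 _ => by ring
    have hmrpos : ∀ u2, 0 < bpU2m pY r u2 := fun u2 =>
      Finset.sum_pos (fun y2 _ => mul_pos (hY2pos y2) (hrpos y2 u2)) Finset.univ_nonempty
    -- bound the first term
    have hS1 : (∑ y2, bpY2 pY y2 * ∑ u2, (r y2 u2 * Real.log (r y2 u2)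
          - p2 y2 u2 * Real.log (p2 y2 u2) - (r y2 u2 - p2 y2 u2) * M u2 y2))
        ≤ -t * K := by
      rw [hK, Finset.mul_sum]
      refine Finset.sum_le_sum fun y2 _ => ?_
      have hzero : ∑ u2, (r y2 u2 - p2 y2 u2) = 0 := by
        rw [Finset.sum_sub_distrib, (hrchan y2).2, (hp2 y2).2, sub_self]
      have hpt : ∀ u2, r y2 u2 * Real.log (r y2 u2)
            - p2 y2 u2 * Real.log (p2 y2 u2) - (r y2 u2 - p2 y2 u2) * M u2 y2
          ≤ (-t) * (p2 y2 u2 * (Real.log (p2 y2 u2) - Real.log (σ y2 u2)))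
            - (r y2 u2 - p2 y2 u2) * Real.log (∑ u2' : U2, Real.exp (M u2' y2)) := by
        intro u2
        have hg1 := gibbs_ge (p2 y2 u2) (r y2 u2) (le_of_lt (hp2pos y2 u2)) (hrpos y2 u2)
        have hg2 := gibbs_ge (σ y2 u2) (r y2 u2) (le_of_lt (hσpos y2 u2)) (hrpos y2 u2)
        have h1t : (0:ℝ) ≤ 1 - t := by linarith
        have f1 := mul_le_mul_of_nonneg_left hg1 h1t
        have f2 := mul_le_mul_of_nonneg_left hg2 (le_of_lt ht0)
        have hrdef : r y2 u2 = (1 - t) * p2 y2 u2 + t * σ y2 u2 := rfl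
        have e0 : (1 - t) * (p2 y2 u2 - r y2 u2) + t * (σ y2 u2 - r y2 u2) = 0 := by
          rw [hrdef]; ring
        have e1 : (1 - t) * (p2 y2 u2 * Real.log (r y2 u2))
            + t * (σ y2 u2 * Real.log (r y2 u2))
            = r y2 u2 * Real.log (r y2 u2) := by
          rw [hrdef]; ring
        have hgoal : r y2 u2 * Real.log (r y2 u2)
            ≤ (1 - t) * (p2 y2 u2 * Real.log (p2 y2 u2))
              + t * (σ y2 u2 * Real.log (σ y2 u2)) := by
          nlinarith [f1, f2, e0, e1]
        have hMeq : M u2 y2 = Real.log (σ y2 u2)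
            + Real.log (∑ u2' : U2, Real.exp (M u2' y2)) := by
          rw [hlogσ u2 y2]; ring
        have hrp : r y2 u2 - p2 y2 u2 = t * (σ y2 u2 - p2 y2 u2) := by
          rw [hrdef]; ring
        have key : ((-t) * (p2 y2 u2 * (Real.log (p2 y2 u2) - Real.log (σ y2 u2)))
              - (r y2 u2 - p2 y2 u2) * Real.log (∑ u2' : U2, Real.exp (M u2' y2)))
            - (r y2 u2 * Real.log (r y2 u2) - p2 y2 u2 * Real.log (p2 y2 u2)
              - (r y2 u2 - p2 y2 u2) * M u2 y2)
            = (1 - t) * (p2 y2 u2 * Real.log (p2 y2 u2))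
              + t * (σ y2 u2 * Real.log (σ y2 u2))
              - r y2 u2 * Real.log (r y2 u2) := by
          rw [hMeq, hrp]; ring
        linarith [key, hgoal]
      have hin : (∑ u2, (r y2 u2 * Real.log (r y2 u2)
            - p2 y2 u2 * Real.log (p2 y2 u2) - (r y2 u2 - p2 y2 u2) * M u2 y2))
          ≤ (-t) * ∑ u2, p2 y2 u2 * (Real.log (p2 y2 u2) - Real.log (σ y2 u2)) := by
        calc (∑ u2, (r y2 u2 * Real.log (r y2 u2)
              - p2 y2 u2 * Real.log (p2 y2 u2) - (r y2 u2 - p2 y2 u2) * M u2 y2))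
            ≤ ∑ u2, ((-t) * (p2 y2 u2 * (Real.log (p2 y2 u2) - Real.log (σ y2 u2)))
              - (r y2 u2 - p2 y2 u2) * Real.log (∑ u2' : U2, Real.exp (M u2' y2))) :=
              Finset.sum_le_sum fun u2 _ => hpt u2
          _ = (-t) * ∑ u2, p2 y2 u2 * (Real.log (p2 y2 u2) - Real.log (σ y2 u2)) := by
              rw [Finset.sum_sub_distrib, ← Finset.mul_sum, ← Finset.sum_mul, hzero]
              ring
      calc bpY2 pY y2 * (∑ u2, (r y2 u2 * Real.log (r y2 u2)
            - p2 y2 u2 * Real.log (p2 y2 u2) - (r y2 u2 - p2 y2 u2) * M u2 y2))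
          ≤ bpY2 pY y2 * ((-t) * ∑ u2, p2 y2 u2
              * (Real.log (p2 y2 u2) - Real.log (σ y2 u2))) :=
            mul_le_mul_of_nonneg_left hin (le_of_lt (hY2pos y2))
        _ = -t * (bpY2 pY y2 * ∑ u2, p2 y2 u2
              * (Real.log (p2 y2 u2) - Real.log (σ y2 u2))) := by ring
    -- bound the second term
    have hS2 : (∑ u2, bpU2m pY r u2 *
          (Real.log (bpU2m pY r u2) - Real.log (bpU2m pY p2 u2)))
        ≤ t ^ 2 * C := by
      have hzero : ∑ u2, (bpU2m pY σ u2 - bpU2m pY p2 u2) = 0 := by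
        rw [Finset.sum_sub_distrib, hmsum σ hσchan, hmsum p2 hp2, sub_self]
      have hpt : ∀ u2, bpU2m pY r u2 *
            (Real.log (bpU2m pY r u2) - Real.log (bpU2m pY p2 u2))
          ≤ t * (bpU2m pY σ u2 - bpU2m pY p2 u2)
            + t ^ 2 * ((bpU2m pY σ u2 - bpU2m pY p2 u2) ^ 2 / bpU2m pY p2 u2) := by
        intro u2
        have hm := hmpos u2
        have hmr' := hmrpos u2
        have hlog : Real.log (bpU2m pY r u2) - Real.log (bpU2m pY p2 u2)
            ≤ (bpU2m pY r u2 - bpU2m pY p2 u2) / bpU2m pY p2 u2 := by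
          have h1 : Real.log (bpU2m pY r u2 / bpU2m pY p2 u2)
              ≤ bpU2m pY r u2 / bpU2m pY p2 u2 - 1 :=
            Real.log_le_sub_one_of_pos (by positivity)
          rw [Real.log_div (ne_of_gt hmr') (ne_of_gt hm)] at h1
          have h2 : bpU2m pY r u2 / bpU2m pY p2 u2 - 1
              = (bpU2m pY r u2 - bpU2m pY p2 u2) / bpU2m pY p2 u2 := by
            field_simp
          linarith
        have hb := mul_le_mul_of_nonneg_left hlog (le_of_lt hmr')
        have hd := hmr u2
        have hfin : bpU2m pY r u2 * ((bpU2m pY r u2 - bpU2m pY p2 u2) / bpU2m pY p2 u2)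
            = t * (bpU2m pY σ u2 - bpU2m pY p2 u2)
              + t ^ 2 * ((bpU2m pY σ u2 - bpU2m pY p2 u2) ^ 2 / bpU2m pY p2 u2) := by
          rw [hd]
          field_simp
          ring
        linarith
      calc (∑ u2, bpU2m pY r u2 *
            (Real.log (bpU2m pY r u2) - Real.log (bpU2m pY p2 u2)))
          ≤ ∑ u2, (t * (bpU2m pY σ u2 - bpU2m pY p2 u2)
              + t ^ 2 * ((bpU2m pY σ u2 - bpU2m pY p2 u2) ^ 2 / bpU2m pY p2 u2)) :=
            Finset.sum_le_sum fun u2 _ => hpt u2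
        _ = t * (∑ u2, (bpU2m pY σ u2 - bpU2m pY p2 u2)) + t ^ 2 * C := by
            rw [hC, Finset.sum_add_distrib, ← Finset.mul_sum, ← Finset.mul_sum]
        _ = t ^ 2 * C := by rw [hzero]; ring
    -- combine and contradict minimality
    have hsub := FbPQ_sub s1 s2 a pY p1 qY1 qY2 qUU qU2 p2 r (ne_of_gt hs2) hPne
    rw [← hM] at hsub
    have b1 := mul_le_mul_of_nonneg_left hS1 (le_of_lt hs2)
    have b2 := mul_le_mul_of_nonneg_left hS2 (le_of_lt hs1)
    have f3 := mul_le_mul_of_nonneg_left htK (le_of_lt ht0)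
    have hlt : FbPQ s1 s2 a pY p1 r qY1 qY2 qUU qU2
        < FbPQ s1 s2 a pY p1 p2 qY1 qY2 qUU qU2 := by
      nlinarith [hsub, b1, b2, f3, ht0, mul_pos ht0 (mul_pos hs2 hKpos)]
    exact absurd (hmin r hrchan) (not_le.mpr hlt)
  · -- fixed point → minimality
    intro hfp p2' hchan
    have hμ : ∀ u2 y2, M u2 y2 = Real.log (p2 y2 u2)
        + Real.log (∑ u2' : U2, Real.exp (M u2' y2)) := by
      intro u2 y2
      have h1 : Real.exp (M u2 y2) = p2 y2 u2 * ∑ u2' : U2, Real.exp (M u2' y2) := by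
        rw [hfp u2 y2]
        field_simp
      calc M u2 y2 = Real.log (Real.exp (M u2 y2)) := (Real.log_exp _).symm
        _ = Real.log (p2 y2 u2 * ∑ u2' : U2, Real.exp (M u2' y2)) := by rw [h1]
        _ = _ := Real.log_mul (ne_of_gt (hp2pos y2 u2)) (ne_of_gt (hZpos y2))
    have hsub := FbPQ_sub s1 s2 a pY p1 qY1 qY2 qUU qU2 p2 p2' (ne_of_gt hs2) hPne
    rw [← hM] at hsub
    have hS1 : 0 ≤ ∑ y2, bpY2 pY y2 * ∑ u2, (p2' y2 u2 * Real.log (p2' y2 u2)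
          - p2 y2 u2 * Real.log (p2 y2 u2) - (p2' y2 u2 - p2 y2 u2) * M u2 y2) := by
      refine Finset.sum_nonneg fun y2 _ => mul_nonneg (le_of_lt (hY2pos y2)) ?_
      have hzero : ∑ u2, (p2' y2 u2 - p2 y2 u2) = 0 := by
        rw [Finset.sum_sub_distrib, (hchan y2).2, (hp2 y2).2, sub_self]
      have hpt : ∀ u2, (p2' y2 u2 - p2 y2 u2)
            - (p2' y2 u2 - p2 y2 u2) * Real.log (∑ u2' : U2, Real.exp (M u2' y2))
          ≤ p2' y2 u2 * Real.log (p2' y2 u2)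
            - p2 y2 u2 * Real.log (p2 y2 u2) - (p2' y2 u2 - p2 y2 u2) * M u2 y2 := by
        intro u2
        have hg := gibbs_ge (p2' y2 u2) (p2 y2 u2) ((hchan y2).1 u2) (hp2pos y2 u2)
        rw [hμ u2 y2]
        nlinarith [hg]
      calc (0:ℝ) = ∑ u2, ((p2' y2 u2 - p2 y2 u2)
            - (p2' y2 u2 - p2 y2 u2) * Real.log (∑ u2' : U2, Real.exp (M u2' y2))) := by
            rw [Finset.sum_sub_distrib, ← Finset.sum_mul, hzero]
            ring
        _ ≤ _ := Finset.sum_le_sum fun u2 _ => hpt u2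
    have hS2 : 0 ≤ ∑ u2, bpU2m pY p2' u2 *
        (Real.log (bpU2m pY p2' u2) - Real.log (bpU2m pY p2 u2)) := by
      have hzero : ∑ u2, (bpU2m pY p2' u2 - bpU2m pY p2 u2) = 0 := by
        rw [Finset.sum_sub_distrib, hmsum p2' hchan, hmsum p2 hp2, sub_self]
      have hpt : ∀ u2, bpU2m pY p2' u2 - bpU2m pY p2 u2
          ≤ bpU2m pY p2' u2 * (Real.log (bpU2m pY p2' u2) - Real.log (bpU2m pY p2 u2)) := by
        intro u2
        have hg := gibbs_ge (bpU2m pY p2' u2) (bpU2m pY p2 u2)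
          (hmnn p2' (fun y2 u2 => (hchan y2).1 u2) u2) (hmpos u2)
        nlinarith [hg]
      calc (0:ℝ) = ∑ u2, (bpU2m pY p2' u2 - bpU2m pY p2 u2) := hzero.symm
        _ ≤ _ := Finset.sum_le_sum fun u2 _ => hpt u2
    nlinarith [mul_nonneg (le_of_lt hs2) hS1, mul_nonneg (le_of_lt hs1) hS2]
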